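/- arXiv:2407.08654 — 3 statements merged into one kernel-verified Lean document; each statement's English description precedes it below -/
import Mathlib

section
/- Let $1 = t_0 < t_1 < \cdots < t_K$ be integers, and for each round $s$ let $|\mathcal{S}_s| = K + 1 - j$ when $s \in [t_{j-1}, t_j)$. Define $H_i = (t_i-1)/\left(\sum_{j=1}^i \frac{t_j - t_{j-1}}{K+1-j}\right)$ and $\Delta_i = \sqrt{H_i/(t_i-1)}$. Then for any interval $[s_1, s_2] \subseteq [1, t_{i+1}-1]$: $\sum_{s=s_1}^{s_2} \frac{\Delta_{i+1}}{|\mathcal{S}_s|} \leq \sqrt{\sum_{s=s_1}^{s_2} \frac{1}{|\mathcal{S}_s|}}$. -/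
/-! Counting rounds block by block, `D = ∑_{s < t_{i+1}} 1/|S_s|` is exactly the denominator of
`H_{i+1}`, so `Δ_{i+1} = 1/√D`. The left side is `a/√D` with `a = ∑_{s=s₁}^{s₂} 1/|S_s| ≤ D`,
hence at most `√a`. -/

open Finset

/-- The harmonic-mean quantity `H i = (t i - 1) / (∑ j in [1,i], (t j - t (j-1)) / (K+1-j))`. -/
noncomputable def Hmean (K : ℕ) (t : ℕ → ℕ) (i : ℕ) : ℝ :=
  ((t i : ℝ) - 1) / (∑ j ∈ Finset.Icc 1 i, ((t j : ℝ) - (t (j - 1) : ℝ)) / ((K : ℝ) + 1 - (j : ℝ)))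

lemma Real.sqrt_one_div_mul_le_sqrt {a D : ℝ} (ha : 0 ≤ a) (haD : a ≤ D) :
    √(1 / D) * a ≤ √a := by
  rcases ha.eq_or_lt with rfl | ha
  · simp
  have hD : 0 < √D := Real.sqrt_pos.mpr (ha.trans_le haD)
  rw [one_div, Real.sqrt_inv, inv_mul_eq_div, div_le_iff₀ hD]
  calc a = √a * √a := (Real.mul_self_sqrt ha.le).symm
    _ ≤ √a * √D := by gcongr

section ArmsetSizes

variable {K : ℕ} {t sz : ℕ → ℕ}

lemma sum_Ico_one_div_armset_size
    (hsz : ∀ j, 1 ≤ j → j ≤ K → ∀ s, t (j - 1) ≤ s → s < t j → sz s = K + 1 - j)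
    {n : ℕ} (hn : n < K) (htn : t n ≤ t (n + 1)) :
    ∑ s ∈ Ico (t n) (t (n + 1)), (1 : ℝ) / sz s
      = ((t (n + 1) : ℝ) - t n) / ((K : ℝ) + 1 - (n + 1 : ℕ)) := by
  have hconst : ∀ s ∈ Ico (t n) (t (n + 1)), (1 : ℝ) / sz s = 1 / ((K : ℝ) + 1 - (n + 1 : ℕ)) := by
    intro s hs
    rw [mem_Ico] at hs
    rw [hsz (n + 1) (by omega) hn s hs.1 hs.2, Nat.cast_sub (by omega)]
    push_cast
    ring
  rw [sum_congr rfl hconst, sum_const, Nat.card_Ico, nsmul_eq_mul, Nat.cast_sub htn]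
  ring

/-- Summing `1 / |S_s|` over whole blocks gives the denominator of `Hmean`. -/
lemma sum_Ico_one_div_armset_size_eq (ht : StrictMonoOn t (Set.Iic K))
    (hsz : ∀ j, 1 ≤ j → j ≤ K → ∀ s, t (j - 1) ≤ s → s < t j → sz s = K + 1 - j)
    {m : ℕ} (hm : m ≤ K) :
    ∑ s ∈ Ico (t 0) (t m), (1 : ℝ) / sz s
      = ∑ j ∈ Icc 1 m, ((t j : ℝ) - t (j - 1)) / ((K : ℝ) + 1 - j) := by
  induction m with
  | zero => simp
  | succ n ih =>
    have hmono : ∀ {a b}, a ≤ b → b ≤ K → t a ≤ t b := fun hab hb =>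
      ht.monotoneOn (Set.mem_Iic.mpr (hab.trans hb)) (Set.mem_Iic.mpr hb) hab
    rw [← sum_Ico_consecutive _ (hmono n.zero_le (by omega)) (hmono n.le_succ hm),
      ih (by omega), sum_Icc_succ_top (by omega),
      sum_Ico_one_div_armset_size hsz hm (hmono n.le_succ hm), Nat.add_sub_cancel]

end ArmsetSizes

theorem stmt9_general (K : ℕ) (t : ℕ → ℕ) (ht0 : t 0 = 1)
    (hmono : ∀ j < K, t j < t (j + 1))
    (sz : ℕ → ℕ)
    (hsz : ∀ j, 1 ≤ j → j ≤ K → ∀ s, t (j - 1) ≤ s → s < t j → sz s = K + 1 - j)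
    (i : ℕ) (hi : i + 1 ≤ K)
    (s1 s2 : ℕ) (hs1 : 1 ≤ s1) (hs2 : s2 ≤ t (i + 1) - 1) :
    ∑ s ∈ Finset.Icc s1 s2,
        Real.sqrt (Hmean K t (i + 1) / ((t (i + 1) : ℝ) - 1)) / (sz s : ℝ)
      ≤ Real.sqrt (∑ s ∈ Finset.Icc s1 s2, 1 / (sz s : ℝ)) := by
  have ht : StrictMonoOn t (Set.Iic K) := strictMonoOn_Iic_of_lt_succ hmono
  set D := ∑ j ∈ Icc 1 (i + 1), ((t j : ℝ) - t (j - 1)) / ((K : ℝ) + 1 - j)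
    with hD
  have hT : (1 : ℝ) < t (i + 1) := by
    exact_mod_cast ht0 ▸ ht (Set.mem_Iic.mpr K.zero_le) (Set.mem_Iic.mpr hi) i.succ_pos
  have hΔ : Hmean K t (i + 1) / ((t (i + 1) : ℝ) - 1) = 1 / D := by
    rw [Hmean, div_right_comm, div_self (by linarith)]
  have hsub : ∑ s ∈ Icc s1 s2, (1 : ℝ) / sz s ≤ D := by
    rw [hD, ← sum_Ico_one_div_armset_size_eq ht hsz hi, ht0]
    refine sum_le_sum_of_subset_of_nonneg (fun s hs => ?_) fun s _ _ => by positivity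
    simp only [mem_Icc, mem_Ico] at hs ⊢
    omega
  simp_rw [hΔ, div_eq_mul_one_div (√(1 / D)), ← mul_sum]
  exact Real.sqrt_one_div_mul_le_sqrt (sum_nonneg fun s _ => by positivity) hsub

/-- With eviction times `1 = t 0 < t 1 < ⋯ < t K`, armset sizes
`|S s| = K + 1 - j` for `s ∈ [t (j-1), t j)`, and gap `Δ (i+1) = √(H (i+1) / (t (i+1) - 1))`,
an arm with gap `Δ (i+1)` accrues no significant armset-normalized regret on any interval
`[s1, s2] ⊆ [1, t (i+1) - 1]`. -/
theorem stmt9 (K : ℕ) (hK : 2 ≤ K) (t : ℕ → ℕ) (ht0 : t 0 = 1)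
    (hmono : ∀ j < K, t j < t (j + 1))
    (sz : ℕ → ℕ)
    (hsz : ∀ j, 1 ≤ j → j ≤ K → ∀ s, t (j - 1) ≤ s → s < t j → sz s = K + 1 - j)
    (i : ℕ) (hi : i + 1 ≤ K)
    (s1 s2 : ℕ) (hs1 : 1 ≤ s1) (hs12 : s1 ≤ s2) (hs2 : s2 ≤ t (i + 1) - 1) :
    ∑ s ∈ Finset.Icc s1 s2,
        Real.sqrt (Hmean K t (i + 1) / ((t (i + 1) : ℝ) - 1)) / (sz s : ℝ)
      ≤ Real.sqrt (∑ s ∈ Finset.Icc s1 s2, 1 / (sz s : ℝ)) :=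
  stmt9_general K t ht0 hmono sz hsz i hi s1 s2 hs1 hs2
end

section
/- Let $X$ and $Z$ be independent standard normal random variables, and let $a \geq 0$, $b \in \mathbb{R}$. Then $\mathbb{P}(Z \geq |aX + b|) \leq \mathbb{P}(Z \geq |aX|)$. -/
/-!
For fixed height `z`, the horizontal section `{x | |a x + b| ≤ z}` of the wedge is an interval of
half-length `z / a` centred at `-b / a`. Since a centred Gaussian density is symmetric and
decreasing in `|x|`, among intervals of a given length the centred one carries the most mass;
integrating over `z` gives the claim.
-/

open ProbabilityTheory MeasureTheory Real Set Metric

/-- The interval of half-length `r` around `c` loses `∫₀ᶜ (f (t + r) - f (t - r)) dt` against the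
centred one; this is nonpositive for either sign of `c`, since `|t - r| ≤ |t + r|` exactly when
`t ≥ 0`. -/
theorem intervalIntegral_shift_le_of_abs_le {f : ℝ → ℝ} (hf : Continuous f)
    (hf_abs : ∀ x y, |x| ≤ |y| → f y ≤ f x) (c : ℝ) {r : ℝ} (hr : 0 ≤ r) :
    ∫ x in (c - r)..(c + r), f x ≤ ∫ x in (-r)..r, f x := by
  have hint : ∀ u v, IntervalIntegrable f volume u v := fun u v => hf.intervalIntegrable u v
  have hdiff : (∫ x in (c - r)..(c + r), f x) - ∫ x in (-r)..r, f x
      = (∫ t in (0 : ℝ)..c, f (t + r)) - ∫ t in (0 : ℝ)..c, f (t - r) := by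
    rw [intervalIntegral.integral_interval_sub_interval_comm' (hint _ _) (hint _ _) (hint _ _),
      intervalIntegral.integral_comp_add_right, intervalIntegral.integral_comp_sub_right,
      zero_add, zero_sub, add_comm]
  rcases le_total 0 c with hc | hc
  · have hmono : ∫ t in (0 : ℝ)..c, f (t + r) ≤ ∫ t in (0 : ℝ)..c, f (t - r) := by
      refine intervalIntegral.integral_mono_on hc ((hf.comp (by fun_prop)).intervalIntegrable _ _)
        ((hf.comp (by fun_prop)).intervalIntegrable _ _) fun t ht => hf_abs _ _ ?_
      rw [abs_of_nonneg (by linarith [ht.1] : 0 ≤ t + r)]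
      exact abs_le.2 ⟨by linarith [ht.1], by linarith⟩
    linarith
  · have hmono : ∫ t in c..0, f (t - r) ≤ ∫ t in c..0, f (t + r) := by
      refine intervalIntegral.integral_mono_on hc ((hf.comp (by fun_prop)).intervalIntegrable _ _)
        ((hf.comp (by fun_prop)).intervalIntegrable _ _) fun t ht => hf_abs _ _ ?_
      rw [abs_of_nonpos (by linarith [ht.2] : t - r ≤ 0)]
      exact abs_le.2 ⟨by linarith, by linarith [ht.2]⟩
    rw [intervalIntegral.integral_symm c 0, intervalIntegral.integral_symm (f := fun t => f (t - r))]
      at hdiff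
    linarith

theorem gaussianPDFReal_zero_le_of_abs_le (v : NNReal) {x y : ℝ} (h : |x| ≤ |y|) :
    gaussianPDFReal 0 v y ≤ gaussianPDFReal 0 v x := by
  have hsq : x ^ 2 ≤ y ^ 2 := sq_le_sq.2 h
  simp only [gaussianPDFReal, sub_zero]
  gcongr

theorem gaussianReal_closedBall_le (v : NNReal) (c r : ℝ) :
    gaussianReal 0 v (closedBall c r) ≤ gaussianReal 0 v (closedBall 0 r) := by
  rcases lt_or_ge r 0 with hr | hr
  · simp [closedBall_eq_empty.2 hr]
  rcases eq_or_ne v 0 with rfl | hv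
  · exact prob_le_one.trans (by simp [hr])
  rw [Real.closedBall_eq_Icc, Real.closedBall_eq_Icc, gaussianReal_apply_eq_integral 0 hv,
    gaussianReal_apply_eq_integral 0 hv, integral_Icc_eq_integral_Ioc,
    integral_Icc_eq_integral_Ioc, ← intervalIntegral.integral_of_le (by linarith),
    ← intervalIntegral.integral_of_le (by linarith), zero_sub, zero_add]
  exact ENNReal.ofReal_le_ofReal <| intervalIntegral_shift_le_of_abs_le
    (by rw [gaussianPDFReal_def]; fun_prop) (fun _ _ => gaussianPDFReal_zero_le_of_abs_le v) c hr

theorem setOf_abs_mul_add_le_eq_closedBall {a : ℝ} (ha : 0 < a) (b z : ℝ) :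
    {x : ℝ | |a * x + b| ≤ z} = closedBall (-b / a) (z / a) := by
  ext x
  have hax : a * x + b = a * (x - -b / a) := by field_simp; ring
  rw [mem_ofPred_eq, hax, abs_mul, abs_of_pos ha, mem_closedBall, Real.dist_eq, le_div_iff₀ ha,
    mul_comm]

theorem gaussianReal_abs_mul_add_le (v : NNReal) {a : ℝ} (ha : 0 ≤ a) (b z : ℝ) :
    gaussianReal 0 v {x | |a * x + b| ≤ z} ≤ gaussianReal 0 v {x | |a * x| ≤ z} := by
  rcases ha.eq_or_lt with rfl | ha
  · exact measure_mono fun x (hx : |0 * x + b| ≤ z) => by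
      simpa using (abs_nonneg b).trans (by simpa using hx)
  have hcentred := setOf_abs_mul_add_le_eq_closedBall ha 0 z
  simp only [add_zero, neg_zero, zero_div] at hcentred
  rw [setOf_abs_mul_add_le_eq_closedBall ha, hcentred]
  exact gaussianReal_closedBall_le v (-b / a) (z / a)

/-- For independent standard normals `X, Z` and `a ≥ 0`, `b ∈ ℝ`:
`P(Z ≥ |a X + b|) ≤ P(Z ≥ |a X|)` (wedge-shifting argument). -/
theorem stmt12 (a b : ℝ) (ha : 0 ≤ a) :
    ((gaussianReal 0 1).prod (gaussianReal 0 1)) {p : ℝ × ℝ | |a * p.1 + b| ≤ p.2}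
      ≤ ((gaussianReal 0 1).prod (gaussianReal 0 1)) {p : ℝ × ℝ | |a * p.1| ≤ p.2} := by
  rw [Measure.prod_apply_symm (measurableSet_le (by fun_prop) (by fun_prop)),
    Measure.prod_apply_symm (measurableSet_le (by fun_prop) (by fun_prop))]
  exact lintegral_mono fun z => gaussianReal_abs_mul_add_le 1 ha b z
end

section
/- Let $K \geq 2$ and consider nonnegative gap sequences $\{\delta_t(a)\}_{t \in [T], a \in [K]}$ that are piecewise constant over stationary phases $P_1, \ldots, P_L$ partitioning $[T]$, with value $\delta_\ell(a)$ on phase $P_\ell$. Let $0 = \tau_0 < \tau_1 < \cdots$ be significant-shift times such that for each significant phase $[\tau_i, \tau_{i+1})$ and each arm $a$ there is a time $t_i^a \in [\tau_i, \tau_{i+1}]$ such that for every stationary phase $\ell$ intersecting $[\tau_i, t_i^a]$ with intersection length $d_\ell$: $d_\ell \cdot \delta_\ell(a) \leq \sqrt{K d_\ell}$ whenever $\delta_\ell(a) > 0$ (no significant regret before $t_i^a$), and each stationary phase intersects at most two significant phases. Then $\sum_{i} \sum_{a \in [K]} \frac{1}{K}\sum_{t=\tau_i}^{t_i^a} \delta_t(a)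 \leq \frac{2}{K} \sum_{\ell=1}^L \sum_{a : \delta_\ell(a) > 0} \frac{K}{\delta_\ell(a)}$, i.e. the proposed instance-dependent regret rate is bounded by $O\left(\sum_{\ell=1}^L \sum_{a: \delta_\ell(a)>0} \frac{1}{\delta_\ell(a)}\right)$. -/
open Finset

/-!
Split each window `[τ i, tend i a]` along the stationary phases: phase `ℓ` contributes
`d * g ℓ a`, where `d` is the length of the overlap, and `d * g ℓ a ≤ √(K d)` squares to
`d * (g ℓ a)² ≤ K`, i.e. `d * g ℓ a ≤ K / g ℓ a`. After exchanging the sums, a stationary phase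
meets at most two significant phases, so each pair `(ℓ, a)` is charged `K / g ℓ a` at most twice.
-/

section Phases

variable {M : Type*} [AddCommMonoid M] (e : ℕ → ℕ) {L : ℕ}

theorem sum_range_eq_sum_phases (he0 : e 0 = 0) (hmono : ∀ ℓ < L, e ℓ ≤ e (ℓ + 1))
    (f : ℕ → M) :
    ∑ t ∈ range (e L), f t = ∑ ℓ ∈ Icc 1 L, ∑ t ∈ Ico (e (ℓ - 1)) (e ℓ), f t := by
  induction L with
  | zero => simp [he0]
  | succ L ih =>
    rw [sum_Icc_succ_top (by omega), ← ih fun ℓ hℓ => hmono ℓ (by omega),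
      ← sum_range_add_sum_Ico f (hmono L (by omega))]
    rfl

theorem sum_eq_sum_phases_inter (he0 : e 0 = 0) (hmono : ∀ ℓ < L, e ℓ ≤ e (ℓ + 1))
    (f : ℕ → M) {S : Finset ℕ} (hS : S ⊆ range (e L)) :
    ∑ t ∈ S, f t = ∑ ℓ ∈ Icc 1 L, ∑ t ∈ Ico (e (ℓ - 1)) (e ℓ) ∩ S, f t := by
  simpa only [← sum_filter, filter_mem_eq_inter, inter_eq_right.mpr hS] using
    sum_range_eq_sum_phases e he0 hmono fun t => if t ∈ S then f t else 0

theorem sum_eq_sum_card_inter_nsmul_of_phasewise_const (he0 : e 0 = 0)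
    (hmono : ∀ ℓ < L, e ℓ ≤ e (ℓ + 1)) {f : ℕ → M} {c : ℕ → M}
    (hf : ∀ ℓ ∈ Icc 1 L, ∀ t ∈ Ico (e (ℓ - 1)) (e ℓ), f t = c ℓ)
    {S : Finset ℕ} (hS : S ⊆ range (e L)) :
    ∑ t ∈ S, f t = ∑ ℓ ∈ Icc 1 L, #(Ico (e (ℓ - 1)) (e ℓ) ∩ S) • c ℓ := by
  rw [sum_eq_sum_phases_inter e he0 hmono f hS]
  refine sum_congr rfl fun ℓ hℓ => ?_
  rw [← sum_const]
  exact sum_congr rfl fun t ht => hf ℓ hℓ t (mem_of_mem_inter_left ht)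

end Phases

theorem mul_le_div_of_mul_le_sqrt {c d x : ℝ} (hc : 0 ≤ c) (hd : 0 ≤ d) (hx : 0 < x)
    (h : d * x ≤ √(c * d)) : d * x ≤ c / x := by
  have hsq : (d * x) ^ 2 ≤ c * d := (Real.le_sqrt (by positivity) (by positivity)).mp h
  rw [le_div_iff₀ hx]
  rcases hd.eq_or_lt with rfl | hd
  · simpa using hc
  · nlinarith

theorem sum_le_card_filter_nsmul {ι N : Type*} [AddCommMonoid N] [Preorder N] [AddLeftMono N]
    {s : Finset ι} {p : ι → Prop} [DecidablePred p] {f : ι → N} {b : N}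
    (hzero : ∀ i ∈ s, ¬ p i → f i = 0) (hle : ∀ i ∈ s, p i → f i ≤ b) :
    ∑ i ∈ s, f i ≤ #(s.filter p) • b := by
  rw [← sum_filter_of_ne fun i hi hfi => by_contra fun hp => hfi (hzero i hi hp)]
  exact sum_le_card_nsmul _ _ _ fun i hi => hle i (mem_filter.mp hi).1 (mem_filter.mp hi).2

theorem sum_card_inter_mul_le_two_mul_div {ι : Type*} {K x : ℝ} (hK : 0 ≤ K)
    {P : Finset ℕ} {s : Finset ι} {W W' : ι → Finset ℕ} (hWW' : ∀ i ∈ s, W i ⊆ W' i)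
    (hsqrt : ∀ i ∈ s, 0 < x → #(P ∩ W i) * x ≤ √(K * #(P ∩ W i)))
    (htwo : #(s.filter fun i => (P ∩ W' i).Nonempty) ≤ 2) :
    ∑ i ∈ s, #(P ∩ W i) * x ≤ if 0 < x then 2 * (K / x) else 0 := by
  split_ifs with hx
  · have hzero : ∀ i ∈ s, ¬ (P ∩ W' i).Nonempty → (#(P ∩ W i) : ℝ) * x = 0 := by
      intro i hi hempty
      rw [not_nonempty_iff_eq_empty] at hempty
      have : P ∩ W i = ∅ := subset_empty.mp (hempty ▸ inter_subset_inter_left (hWW' i hi))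
      simp [this]
    calc ∑ i ∈ s, #(P ∩ W i) * x
        ≤ #(s.filter fun i => (P ∩ W' i).Nonempty) • (K / x) :=
          sum_le_card_filter_nsmul hzero fun i hi _ =>
            mul_le_div_of_mul_le_sqrt hK (by positivity) hx (hsqrt i hi hx)
      _ ≤ 2 * (K / x) := by
          rw [nsmul_eq_mul]
          gcongr
          exact_mod_cast htwo
  · exact sum_nonpos fun i _ => mul_nonpos_of_nonneg_of_nonpos (by positivity) (not_lt.mp hx)

theorem stmt15_general (K L nsig : ℕ)
    (e : ℕ → ℕ) (he0 : e 0 = 0) (hemono : ∀ ℓ < L, e ℓ < e (ℓ + 1))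
    (g : ℕ → Fin K → ℝ)
    (δ : ℕ → Fin K → ℝ)
    (hpc : ∀ ℓ ∈ Finset.Icc 1 L, ∀ t ∈ Finset.Ico (e (ℓ - 1)) (e ℓ), ∀ a, δ t a = g ℓ a)
    (τ : ℕ → ℕ)
    (tend : ℕ → Fin K → ℕ)
    (htend : ∀ i < nsig, ∀ a, τ i ≤ tend i a ∧ tend i a ≤ τ (i + 1) ∧ tend i a < e L)
    (hmain : ∀ i < nsig, ∀ a, ∀ ℓ ∈ Finset.Icc 1 L, 0 < g ℓ a →
      (((Finset.Ico (e (ℓ - 1)) (e ℓ)) ∩ (Finset.Icc (τ i) (tend i a))).card : ℝ) * g ℓ a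
        ≤ Real.sqrt ((K : ℝ) *
            (((Finset.Ico (e (ℓ - 1)) (e ℓ)) ∩ (Finset.Icc (τ i) (tend i a))).card : ℝ)))
    (htwo : ∀ ℓ ∈ Finset.Icc 1 L,
      ((Finset.range nsig).filter
        (fun i => ((Finset.Ico (e (ℓ - 1)) (e ℓ)) ∩ (Finset.Icc (τ i) (τ (i + 1)))).Nonempty)).card
        ≤ 2) :
    ∑ i ∈ Finset.range nsig, ∑ a : Fin K,
        (1 / (K : ℝ)) * ∑ t ∈ Finset.Icc (τ i) (tend i a), δ t a
      ≤ (2 / (K : ℝ)) * ∑ ℓ ∈ Finset.Icc 1 L,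
          ∑ a ∈ Finset.univ.filter (fun a => 0 < g ℓ a), (K : ℝ) / g ℓ a := by
  have hmono : ∀ ℓ < L, e ℓ ≤ e (ℓ + 1) := fun ℓ hℓ => (hemono ℓ hℓ).le
  have hsplit : ∀ i ∈ range nsig, ∀ a, ∑ t ∈ Icc (τ i) (tend i a), δ t a =
      ∑ ℓ ∈ Icc 1 L, (#(Ico (e (ℓ - 1)) (e ℓ) ∩ Icc (τ i) (tend i a)) : ℝ) * g ℓ a := by
    intro i hi a
    simp only [← nsmul_eq_mul]
    refine sum_eq_sum_card_inter_nsmul_of_phasewise_const e he0 hmono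
      (fun ℓ hℓ t ht => hpc ℓ hℓ t ht a) fun t ht => mem_range.mpr ?_
    exact (mem_Icc.mp ht).2.trans_lt (htend i (mem_range.mp hi) a).2.2
  have hphase : ∀ ℓ ∈ Icc 1 L, ∀ a, ∑ i ∈ range nsig,
      (#(Ico (e (ℓ - 1)) (e ℓ) ∩ Icc (τ i) (tend i a)) : ℝ) * g ℓ a
        ≤ if 0 < g ℓ a then 2 * (K / g ℓ a) else 0 := fun ℓ hℓ a =>
    sum_card_inter_mul_le_two_mul_div K.cast_nonneg
      (fun i hi => Icc_subset_Icc le_rfl (htend i (mem_range.mp hi) a).2.1)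
      (fun i hi hg => hmain i (mem_range.mp hi) a ℓ hℓ hg) (htwo ℓ hℓ)
  calc _ = 1 / (K : ℝ) * ∑ a, ∑ ℓ ∈ Icc 1 L, ∑ i ∈ range nsig,
        (#(Ico (e (ℓ - 1)) (e ℓ) ∩ Icc (τ i) (tend i a)) : ℝ) * g ℓ a := by
        rw [sum_congr rfl fun i hi => sum_congr rfl fun a _ => by rw [hsplit i hi a], sum_comm]
        simp only [← mul_sum]
        exact congrArg _ (sum_congr rfl fun a _ => sum_comm)
    _ ≤ 1 / (K : ℝ) * ∑ a, ∑ ℓ ∈ Icc 1 L, if 0 < g ℓ a then 2 * (K / g ℓ a) else 0 := by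
        gcongr with a _ ℓ hℓ
        exact hphase ℓ hℓ a
    _ = _ := by
        rw [sum_comm]
        simp only [mul_sum, sum_filter]
        refine sum_congr rfl fun ℓ _ => sum_congr rfl fun a _ => ?_
        split_ifs <;> ring

/-- In a piecewise-stationary environment with stationary phases
`[e (ℓ-1), e ℓ)` on which arm `a` has constant gap `g ℓ a ≥ 0`, and significant phases
`[τ i, τ (i+1))` with per-arm times `t_i^a = tend i a ∈ [τ i, τ (i+1)]` such that no arm has
significant regret before `tend i a` (each stationary-phase intersection `d` satisfies
`d * g ℓ a ≤ √(K d)` when `g ℓ a > 0`), and each stationary phase intersects at most two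
significant phases, the refined instance-dependent regret rate is bounded by the
gap-dependent rate:
`∑ i ∑ a (1/K) ∑_{t=τ i}^{tend i a} δ t a ≤ (2/K) ∑ ℓ ∑_{a : g ℓ a > 0} K / g ℓ a`. -/
theorem stmt15 (K L nsig : ℕ) (hK : 2 ≤ K) (hL : 1 ≤ L)
    (e : ℕ → ℕ) (he0 : e 0 = 0) (hemono : ∀ ℓ < L, e ℓ < e (ℓ + 1))
    (g : ℕ → Fin K → ℝ) (hg : ∀ ℓ a, 0 ≤ g ℓ a)
    (δ : ℕ → Fin K → ℝ)
    (hpc : ∀ ℓ ∈ Finset.Icc 1 L, ∀ t ∈ Finset.Ico (e (ℓ - 1)) (e ℓ), ∀ a, δ t a = g ℓ a)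
    (τ : ℕ → ℕ) (hτmono : ∀ i < nsig, τ i < τ (i + 1))
    (tend : ℕ → Fin K → ℕ)
    (htend : ∀ i < nsig, ∀ a, τ i ≤ tend i a ∧ tend i a ≤ τ (i + 1) ∧ tend i a < e L)
    (hmain : ∀ i < nsig, ∀ a, ∀ ℓ ∈ Finset.Icc 1 L, 0 < g ℓ a →
      (((Finset.Ico (e (ℓ - 1)) (e ℓ)) ∩ (Finset.Icc (τ i) (tend i a))).card : ℝ) * g ℓ a
        ≤ Real.sqrt ((K : ℝ) *
            (((Finset.Ico (e (ℓ - 1)) (e ℓ)) ∩ (Finset.Icc (τ i) (tend i a))).card : ℝ)))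
    (htwo : ∀ ℓ ∈ Finset.Icc 1 L,
      ((Finset.range nsig).filter
        (fun i => ((Finset.Ico (e (ℓ - 1)) (e ℓ)) ∩ (Finset.Icc (τ i) (τ (i + 1)))).Nonempty)).card
        ≤ 2) :
    ∑ i ∈ Finset.range nsig, ∑ a : Fin K,
        (1 / (K : ℝ)) * ∑ t ∈ Finset.Icc (τ i) (tend i a), δ t a
      ≤ (2 / (K : ℝ)) * ∑ ℓ ∈ Finset.Icc 1 L,
          ∑ a ∈ Finset.univ.filter (fun a => 0 < g ℓ a), (K : ℝ) / g ℓ a :=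
  stmt15_general K L nsig e he0 hemono g δ hpc τ tend htend hmain htwo
end
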